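/- arXiv:1604.02969 — 3 statements merged into one kernel-verified Lean document; each statement's English description precedes it below -/
import Mathlib

section
/- Let k ∈ ℕ and let α₁, …, α_k be compositions. Then the product of monomial quasisymmetric functions satisfies M_{α₁} M_{α₂} ⋯ M_{α_k} = Σ_A M_{column A}, where the sum ranges over all column-reduced matrices A with k rows and finitely many columns of nonnegative integers such that for each g ∈ {1,…,k}, the g-th row of A with zeros removed equals α_g; here column A is the composition of column sums of A. -/
/-- A composition: a finite list of positive integers. -/
def IsComposition (α : List ℕ) : Prop := ∀ a ∈ α, 0 < a

/-- `w^red`: the list obtained from a list of nonnegative integers by removing all zero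
entries. -/
def redList (l : List ℕ) : List ℕ := l.filter (· ≠ 0)

/-- The exponent multiset of the monomial `x_{i 0}^{α₀} x_{i 1}^{α₁} ⋯` attached to a list `α`
and an assignment `i` of variable indices. -/
noncomputable def expOf (α : List ℕ) (i : Fin α.length → ℕ) : ℕ →₀ ℕ :=
  ∑ j : Fin α.length, Finsupp.single (i j) (α.get j)

open Classical in
/-- The monomial quasisymmetric function
`M_α = ∑_{i₁ < i₂ < ⋯ < i_ℓ} x_{i₁}^{α₁} x_{i₂}^{α₂} ⋯ x_{i_ℓ}^{α_ℓ}`, as a formal power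
series in the variables `x₀, x₁, x₂, …`. -/
noncomputable def Mps (k : Type*) [CommRing k] (α : List ℕ) : MvPowerSeries ℕ k :=
  fun d => if ∃ i : Fin α.length → ℕ, StrictMono i ∧ expOf α i = d then 1 else 0

/-- The list of column sums of a matrix `A ∈ ℕ^{m × v}`. -/
def colSums {m v : ℕ} (A : Matrix (Fin m) (Fin v) ℕ) : List ℕ :=
  List.ofFn fun j => ∑ i, A i j

/-- A matrix is column-reduced if no column of it is the zero vector. -/
def ColReduced {m v : ℕ} (A : Matrix (Fin m) (Fin v) ℕ) : Prop :=
  ∀ j, ∃ i, A i j ≠ 0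

/-!
For a composition `α`, the coefficient of `x^d` in `M_α` is `1` exactly when the nonzero
exponents of `d`, read in increasing order of the variables, form `α`. So the coefficient of
`x^d` in `M_{α₁} ⋯ M_{α_m}` counts the decompositions `d = d₁ + ⋯ + d_m` in which each `d_g`
reads `α_g`, while on the right it counts the matrices `A` of the index set whose column sums
read `d`. If `s₁ < ⋯ < s_v` is the support of `d`, then `A_{g,j} = d_g(s_j)` is a bijection
between the two: every `d_g` is supported in `{s₁, …, s_v}`, and its row, with zeros removed,
is what `d_g` reads.
-/

open Finset

namespace Finsupp

theorem support_subset_of_sum_eq {ι α M : Type*} [AddCommMonoid M] [PartialOrder M]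
    [IsOrderedAddMonoid M] [CanonicallyOrderedAdd M] {s : Finset ι} {l : ι → α →₀ M}
    {d : α →₀ M} (h : ∑ g ∈ s, l g = d) {g : ι} (hg : g ∈ s) : (l g).support ⊆ d.support :=
  h ▸ support_mono (Finset.single_le_sum (fun _ _ => zero_le) hg)

variable {ι α M : Type*} [AddCommMonoid M]

theorem sum_single_apply_of_injective [Fintype ι] {t : ι → α} (ht : Function.Injective t)
    (c : ι → M) (j : ι) : (∑ i, single (t i) (c i)) (t j) = c j := by
  classical
  simp [finsetSum_apply, single_apply, ht.eq_iff]

theorem sum_single_apply_of_notMem_range [Fintype ι] {t : ι → α} (c : ι → M) {x : α}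
    (hx : x ∉ Set.range t) : (∑ i, single (t i) (c i)) x = 0 := by
  rw [finsetSum_apply]
  exact Finset.sum_eq_zero fun i _ => single_eq_of_ne' fun h => hx ⟨i, h⟩

theorem sum_single_getElem_sort_of_support_subset [LinearOrder α] {e : α →₀ M} {s : Finset α}
    (h : e.support ⊆ s) : ∑ j : Fin s.sort.length, single s.sort[j.1] (e s.sort[j.1]) = e := by
  rw [Fin.sum_univ_fun_getElem (f := fun a => single a (e a)),
    ← List.sum_toFinset _ (sort_nodup _ _), sort_toFinset,
    ← sum_of_support_subset e h _ (by simp)]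
  exact sum_single e

end Finsupp

theorem Finset.sort_filter {α : Type*} [LinearOrder α] (s : Finset α) (p : α → Prop)
    [DecidablePred p] : (s.filter p).sort = s.sort.filter p := by
  have hnodup := (sort_nodup s (· ≤ ·)).filter (fun x => decide (p x))
  rw [← (List.toFinset_sort _ hnodup).2 ((pairwise_sort s _).filter _), List.toFinset_filter,
    sort_toFinset]
  simp

/-- The composition of the monomial `x^d`: its nonzero exponents, in increasing order of
the variables. -/
noncomputable def sortedVals (d : ℕ →₀ ℕ) : List ℕ := d.support.sort.map d

theorem length_sortedVals (d : ℕ →₀ ℕ) : (sortedVals d).length = #d.support := by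
  simp [sortedVals]

theorem sortedVals_eq_redList_map {e : ℕ →₀ ℕ} {s : Finset ℕ} (h : e.support ⊆ s) :
    sortedVals e = redList (s.sort.map e) := by
  have hfilter : s.filter (fun x => e x ≠ 0) = e.support := by
    ext x
    simpa using fun hx => h (Finsupp.mem_support_iff.2 hx)
  rw [sortedVals, redList, List.filter_map, ← hfilter, sort_filter]
  rfl

theorem support_expOf {α : List ℕ} (hα : IsComposition α) {i : Fin α.length → ℕ}
    (hi : Function.Injective i) : (expOf α i).support = image i univ := by
  ext x
  rw [Finsupp.mem_support_iff, mem_image]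
  constructor
  · intro hx
    by_contra h
    exact hx (Finsupp.sum_single_apply_of_notMem_range _ fun ⟨j, hj⟩ => h ⟨j, mem_univ _, hj⟩)
  · rintro ⟨j, -, rfl⟩
    exact (Finsupp.sum_single_apply_of_injective hi α.get j).trans_ne (hα _ (α.get_mem j)).ne'

theorem sortedVals_expOf {α : List ℕ} (hα : IsComposition α) {i : Fin α.length → ℕ}
    (hi : StrictMono i) : sortedVals (expOf α i) = α := by
  have hsort : (expOf α i).support.sort = List.ofFn i := by
    rw [support_expOf hα hi.injective, Fin.univ_image_def,
      List.toFinset_sort _ (List.nodup_ofFn.2 hi.injective)]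
    exact List.pairwise_ofFn.2 fun _ _ hab => (hi hab).le
  rw [sortedVals, hsort, List.map_ofFn]
  conv_rhs => rw [← List.ofFn_get α]
  exact congrArg List.ofFn (funext (Finsupp.sum_single_apply_of_injective hi.injective α.get))

theorem exists_strictMono_expOf_sortedVals (d : ℕ →₀ ℕ) :
    ∃ i : Fin (sortedVals d).length → ℕ, StrictMono i ∧ expOf (sortedVals d) i = d := by
  set e := d.support.orderEmbOfFin (length_sortedVals d).symm
  refine ⟨e, e.strictMono, ?_⟩
  ext x
  by_cases hx : x ∈ d.support
  · rw [← mem_coe, ← range_orderEmbOfFin d.support (length_sortedVals d).symm] at hx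
    obtain ⟨j, rfl⟩ := hx
    rw [expOf, Finsupp.sum_single_apply_of_injective e.injective]
    exact List.getElem_map ..
  · rw [Finsupp.notMem_support_iff.1 hx]
    apply Finsupp.sum_single_apply_of_notMem_range
    rwa [range_orderEmbOfFin]

theorem exists_strictMono_expOf_iff {α : List ℕ} (hα : IsComposition α) (d : ℕ →₀ ℕ) :
    (∃ i : Fin α.length → ℕ, StrictMono i ∧ expOf α i = d) ↔ sortedVals d = α := by
  constructor
  · rintro ⟨i, hi, rfl⟩
    exact sortedVals_expOf hα hi
  · rintro rfl
    exact exists_strictMono_expOf_sortedVals d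

theorem coeff_Mps (k : Type*) [CommRing k] {α : List ℕ} (hα : IsComposition α) (d : ℕ →₀ ℕ) :
    MvPowerSeries.coeff d (Mps k α) = if sortedVals d = α then 1 else 0 := by
  simp only [MvPowerSeries.coeff_apply, Mps, exists_strictMono_expOf_iff hα d]

theorem coeff_prod_Mps (k : Type*) [CommRing k] {m : ℕ} {α : Fin m → List ℕ}
    (hα : ∀ g, IsComposition (α g)) (d : ℕ →₀ ℕ) :
    MvPowerSeries.coeff d (∏ g, Mps k (α g)) =
      #{l ∈ finsuppAntidiag univ d | ∀ g, sortedVals (l g) = α g} := by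
  simp only [MvPowerSeries.coeff_prod, coeff_Mps k (hα _), Fintype.prod_boole]
  convert sum_boole _ _

theorem sum_redList (l : List ℕ) : (redList l).sum = l.sum := by
  induction l with
  | nil => rfl
  | cons a l ih => by_cases ha : a = 0 <;> simp_all [redList]

theorem sum_eq_sum_of_redList_ofFn_eq {v : ℕ} {r : Fin v → ℕ} {α : List ℕ}
    (h : redList (List.ofFn r) = α) : ∑ j, r j = α.sum := by
  rw [← h, sum_redList, List.sum_ofFn]

theorem isComposition_colSums {m v : ℕ} {A : Matrix (Fin m) (Fin v) ℕ} (hA : ColReduced A) :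
    IsComposition (colSums A) := by
  intro a ha
  obtain ⟨j, rfl⟩ := List.mem_ofFn.1 ha
  obtain ⟨g, hg⟩ := hA j
  exact Finset.sum_pos' (fun _ _ => Nat.zero_le _) ⟨g, mem_univ g, Nat.pos_of_ne_zero hg⟩

theorem sortedVals_eq_colSums_iff {m v : ℕ} (d : ℕ →₀ ℕ) (A : Matrix (Fin m) (Fin v) ℕ) :
    sortedVals d = colSums A ↔
      (⟨d.support.sort.length, fun j => d d.support.sort[j.1]⟩ : Σ n, Fin n → ℕ) =
        ⟨v, fun j => ∑ g, A g j⟩ := by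
  rw [colSums, sortedVals, ← List.ofFn_getElem_eq_map, List.ofFn_inj']

def colReducedWithRows {m : ℕ} (α : Fin m → List ℕ) :
    Set (Σ v : ℕ, Matrix (Fin m) (Fin v) ℕ) :=
  {p | ColReduced p.2 ∧ ∀ g, redList (List.ofFn (p.2 g)) = α g}

/- Every entry, and (as no column vanishes) the number of columns, is at most the total
`∑ g, (α g).sum` of all entries. -/
theorem finite_colReducedWithRows {m : ℕ} (α : Fin m → List ℕ) :
    (colReducedWithRows α).Finite := by
  set N := ∑ g, (α g).sum
  refine ((Set.finite_Iic N).biUnion fun v _ =>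
    (Set.finite_Iic (fun _ _ => N : Fin m → Fin v → ℕ)).image (Sigma.mk v)).subset ?_
  rintro ⟨v, A⟩ ⟨hA, hrows⟩
  have htotal : ∑ j, ∑ g, A g j = N := by
    rw [Finset.sum_comm]
    exact Finset.sum_congr rfl fun g _ => sum_eq_sum_of_redList_ofFn_eq (hrows g)
  refine Set.mem_biUnion (x := v) ?_ ⟨A, fun g j => ?_, rfl⟩
  · calc v = ∑ _j : Fin v, 1 := by simp
      _ ≤ ∑ j, ∑ g, A g j := Finset.sum_le_sum fun j _ =>
          isComposition_colSums hA _ (List.mem_ofFn.2 ⟨j, rfl⟩)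
      _ = N := htotal
  · calc A g j ≤ ∑ j, ∑ g, A g j :=
          (single_le_sum (f := fun g => A g j) (fun _ _ => Nat.zero_le _) (mem_univ g)).trans
            (single_le_sum (f := fun j => ∑ g, A g j) (fun _ _ => Nat.zero_le _) (mem_univ j))
      _ = N := htotal

theorem coeff_sum_Mps_colSums (k : Type*) [CommRing k] {m : ℕ} (α : Fin m → List ℕ)
    (d : ℕ →₀ ℕ) :
    MvPowerSeries.coeff d (∑ p ∈ (finite_colReducedWithRows α).toFinset, Mps k (colSums p.2)) =
      #{p ∈ (finite_colReducedWithRows α).toFinset | sortedVals d = colSums p.2} := by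
  rw [map_sum, ← sum_boole]
  refine sum_congr rfl fun p hp => coeff_Mps k (isComposition_colSums ?_) d
  exact ((finite_colReducedWithRows α).mem_toFinset.1 hp).1

def exponentMatrix {m : ℕ} (d : ℕ →₀ ℕ) (l : Fin m → ℕ →₀ ℕ) :
    Σ v : ℕ, Matrix (Fin m) (Fin v) ℕ :=
  ⟨d.support.sort.length, fun g j => l g d.support.sort[j.1]⟩

section exponentMatrix

variable {m : ℕ} {α : Fin m → List ℕ} {d : ℕ →₀ ℕ}

theorem exponentMatrix_mem {l : Fin m → ℕ →₀ ℕ} (hsum : ∑ g, l g = d)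
    (hrows : ∀ g, sortedVals (l g) = α g) :
    exponentMatrix d l ∈ colReducedWithRows α ∧
      sortedVals d = colSums (exponentMatrix d l).2 := by
  have hcol : ∀ j : Fin d.support.sort.length,
      ∑ g, l g d.support.sort[j.1] = d d.support.sort[j.1] := fun j => by
    rw [← Finsupp.finsetSum_apply, hsum]
  refine ⟨⟨fun j => ?_, fun g => ?_⟩, ?_⟩
  · by_contra! h
    have : d.support.sort[j.1] ∈ d.support := (mem_sort _).1 (List.getElem_mem _)
    exact Finsupp.mem_support_iff.1 this ((hcol j).symm.trans (sum_eq_zero fun g _ => h g))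
  · rw [exponentMatrix, List.ofFn_getElem_eq_map,
      ← sortedVals_eq_redList_map (Finsupp.support_subset_of_sum_eq hsum (mem_univ g))]
    exact hrows g
  · refine (sortedVals_eq_colSums_iff d _).2 ?_
    simp only [exponentMatrix, hcol]

theorem exponentMatrix_injective_of_sum_eq {l₁ l₂ : Fin m → ℕ →₀ ℕ} (h₁ : ∑ g, l₁ g = d)
    (h₂ : ∑ g, l₂ g = d) (heq : exponentMatrix d l₁ = exponentMatrix d l₂) : l₁ = l₂ := by
  have hmat := congrFun₂ (eq_of_heq (Sigma.mk.inj_iff.1 heq).2)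
  funext g
  rw [← Finsupp.sum_single_getElem_sort_of_support_subset
      (Finsupp.support_subset_of_sum_eq h₁ (mem_univ g)),
    ← Finsupp.sum_single_getElem_sort_of_support_subset
      (Finsupp.support_subset_of_sum_eq h₂ (mem_univ g))]
  simp only [hmat]

theorem exists_exponentMatrix_eq {p : Σ v : ℕ, Matrix (Fin m) (Fin v) ℕ}
    (hp : p ∈ colReducedWithRows α) (hd : sortedVals d = colSums p.2) :
    ∃ l : Fin m →₀ ℕ →₀ ℕ, ∑ g, l g = d ∧ (∀ g, sortedVals (l g) = α g) ∧
      exponentMatrix d l = p := by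
  obtain ⟨v, A⟩ := p
  obtain ⟨rfl, hcols⟩ := Sigma.mk.inj_iff.1 ((sortedVals_eq_colSums_iff d A).1 hd)
  have hcol := congrFun (eq_of_heq hcols)
  set l : Fin m →₀ ℕ →₀ ℕ := Finsupp.equivFunOnFinite.symm
    fun g => ∑ j, Finsupp.single d.support.sort[j.1] (A g j)
  have hsort_inj := List.nodup_iff_injective_get.1 (sort_nodup d.support (· ≤ ·))
  have hentries (g j) : l g d.support.sort[j.1] = A g j :=
    Finsupp.sum_single_apply_of_injective hsort_inj (A g) j
  have hsum : ∑ g, l g = d := by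
    calc ∑ g, l g = ∑ j, Finsupp.single d.support.sort[j.1] (∑ g, A g j) := by
          simp only [l, Finsupp.coe_equivFunOnFinite_symm, Finsupp.single_finsetSum]
          exact Finset.sum_comm
      _ = d := by
          simp only [← hcol]
          exact Finsupp.sum_single_getElem_sort_of_support_subset subset_rfl
  refine ⟨l, hsum, fun g => ?_, by simp only [exponentMatrix, hentries]⟩
  rw [sortedVals_eq_redList_map (Finsupp.support_subset_of_sum_eq hsum (mem_univ g)),
    ← List.ofFn_getElem_eq_map]
  simp only [hentries]
  exact hp.2 g

end exponentMatrix

theorem card_decompositions_eq_card_matrices {m : ℕ} (α : Fin m → List ℕ) (d : ℕ →₀ ℕ) :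
    #{l ∈ finsuppAntidiag univ d | ∀ g, sortedVals (l g) = α g} =
      #{p ∈ (finite_colReducedWithRows α).toFinset | sortedVals d = colSums p.2} := by
  refine card_nbij (exponentMatrix d ·) (fun l hl => ?_) (fun l₁ hl₁ l₂ hl₂ heq => ?_)
    (fun p hp => ?_) <;>
    simp only [coe_filter, mem_finsuppAntidiag, Set.Finite.mem_toFinset, Set.mem_ofPred_eq] at *
  · exact exponentMatrix_mem hl.1.1 hl.2
  · exact DFunLike.coe_injective (exponentMatrix_injective_of_sum_eq hl₁.1.1 hl₂.1.1 heq)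
  · obtain ⟨l, hsum, hrows, rfl⟩ := exists_exponentMatrix_eq hp.1 hp.2
    exact ⟨l, ⟨⟨hsum, subset_univ _⟩, hrows⟩, rfl⟩

/-- Product formula for monomial quasisymmetric functions: for compositions `α₁, …, α_m`,
`M_{α₁} M_{α₂} ⋯ M_{α_m} = ∑_A M_{column A}`, the sum ranging over all column-reduced matrices
`A` of nonnegative integers with `m` rows (and finitely many columns) whose `g`-th row, with
zeros removed, equals `α_g` for each `g`. -/
theorem Mps_list_prod (k : Type*) [CommRing k] (m : ℕ) (α : Fin m → List ℕ)
    (hα : ∀ g, IsComposition (α g)) :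
    (∏ g, Mps k (α g)) =
      ∑ᶠ p ∈ {p : Σ v : ℕ, Matrix (Fin m) (Fin v) ℕ |
          ColReduced p.2 ∧ ∀ g, redList (List.ofFn (p.2 g)) = α g},
        Mps k (colSums p.2) := by
  change _ = ∑ᶠ p ∈ colReducedWithRows α, _
  rw [← (finite_colReducedWithRows α).coe_toFinset, finsum_mem_coe_finset]
  ext d
  rw [coeff_prod_Mps k hα, coeff_sum_Mps_colSums, card_decompositions_eq_card_matrices]
end

section
/- Let H be a connected graded k-Hopf algebra over a commutative ring k, ζ : H → k a k-algebra homomorphism, and Ψ : H → QSym the unique graded k-coalgebra homomorphism with ε_P ∘ Ψ = ζ (Aguiar–Bergeron–Sottile). Then for every n ∈ ℕ and h ∈ H_n, Ψ(h) = Σ_{α composition, |α| = n} ζ_α(h) · M_α, where for α = (a₁,…,a_k), ζ_α is the composite H → H^{⊗k} → H^{⊗k} → k^{⊗k} ≅ k of Δ^{(k−1)}, the projection π_α = π_{a₁} ⊗ ⋯ ⊗ π_{a_k} onto graded components, and ζ^{⊗k}. -/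
open TensorProduct

section

variable {k H : Type*} [CommRing k] [Ring H] [HopfAlgebra k H]

/-- For a `k`-algebra homomorphism `ζ : H → k` and graded projections `π n : H → H`, and a
composition `α = (a₁, …, a_m)`, the map `ζ_α : H → k` : the composite of the iterated
comultiplication `Δ^{(m-1)} : H → H^{⊗m}`, the projection `π_α = π_{a₁} ⊗ ⋯ ⊗ π_{a_m}`,
`ζ^{⊗m}`, and the canonical isomorphism `k^{⊗m} ≅ k` (written in its standard recursive
form). -/
noncomputable def zetaA (ζ : H →ₐ[k] k) (π : ℕ → H →ₗ[k] H) : List ℕ → (H →ₗ[k] k)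
  | [] => Coalgebra.counit (R := k)
  | a :: t => LinearMap.mul' k k ∘ₗ
      TensorProduct.map (ζ.toLinearMap ∘ₗ π a) (zetaA ζ π t) ∘ₗ Coalgebra.comul (R := k)

/-- Convolution product on `Hom_k(H, k)`: `f ⋆ g = m_k ∘ (f ⊗ g) ∘ Δ_H`. -/
noncomputable def convK (f g : H →ₗ[k] k) : H →ₗ[k] k :=
  LinearMap.mul' k k ∘ₗ TensorProduct.map f g ∘ₗ Coalgebra.comul (R := k)

/-- For graded projections `π n : H → H` and a composition `α = (a₁, …, a_m)`, the map
`ξ_α = m^{(m-1)} ∘ π_α ∘ Δ^{(m-1)} : H → H` (written in its standard recursive form). -/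
noncomputable def xiA (π : ℕ → H →ₗ[k] H) : List ℕ → (H →ₗ[k] H)
  | [] => Algebra.linearMap k H ∘ₗ Coalgebra.counit (R := k)
  | a :: t => LinearMap.mul' k H ∘ₗ
      TensorProduct.map (π a) (xiA π t) ∘ₗ Coalgebra.comul (R := k)

/-- Convolution product on `End_k(H)`: `f ⋆ g = m_H ∘ (f ⊗ g) ∘ Δ_H`. -/
noncomputable def convH (f g : H →ₗ[k] H) : H →ₗ[k] H :=
  LinearMap.mul' k H ∘ₗ TensorProduct.map f g ∘ₗ Coalgebra.comul (R := k)

end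

open TensorProduct

/-- The underlying `k`-module of the quasisymmetric functions: the free `k`-module with basis
indexed by finite lists of natural numbers (the monomial quasisymmetric functions `M_α` for
compositions `α`, i.e. lists with positive entries, form the monomial basis). -/
abbrev QSymM (k : Type*) [CommRing k] : Type _ := List ℕ →₀ k


/-- The monomial quasisymmetric function `M_α`, as a basis vector. -/
noncomputable def Mq (k : Type*) [CommRing k] (α : List ℕ) : QSymM k := Finsupp.single α 1

/-- The comultiplication of `QSym` (deconcatenation coproduct):
`Δ (M_β) = ∑ i, M_{(b₁,…,b_i)} ⊗ M_{(b_{i+1},…,b_ℓ)}`. -/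
noncomputable def comulQ (k : Type*) [CommRing k] : QSymM k →ₗ[k] QSymM k ⊗[k] QSymM k :=
  Finsupp.lsum k fun β => LinearMap.toSpanSingleton k _
    (∑ i ∈ Finset.range (β.length + 1), Mq k (β.take i) ⊗ₜ[k] Mq k (β.drop i))

/-- The counit of `QSym`: `ε (M_α) = 1` if `α = ()` and `0` otherwise. -/
noncomputable def counitQ (k : Type*) [CommRing k] : QSymM k →ₗ[k] k :=
  Finsupp.lsum k fun β => if β = [] then LinearMap.id else 0

/-- The algebra homomorphism `ε_P : QSym → k`, `f ↦ f (1, 0, 0, …)`: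
it sends `M_α ↦ 1` if `α` has length `≤ 1`, and `M_α ↦ 0` otherwise. -/
noncomputable def epsP (k : Type*) [CommRing k] : QSymM k →ₗ[k] k :=
  Finsupp.lsum k fun β => if β.length ≤ 1 then LinearMap.id else 0

/-- The projection of `QSym` onto its homogeneous component of degree `n`. -/
noncomputable def piQ (k : Type*) [CommRing k] (n : ℕ) : QSymM k →ₗ[k] QSymM k :=
  Finsupp.lsum k fun β => if β.sum = n then LinearMap.toSpanSingleton k _ (Mq k β) else 0

/-! The coefficient of `M_α` in `Ψ h` is a linear functional of `h`. Since the coproduct of `QSym`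
is deconcatenation and `Ψ` is a coalgebra map, the functional for `a :: t` is the convolution of
those for `[a]` and `t`, so everything reduces to one-part compositions. On `H_m` the coefficients
of `M_∅` and `M_(m)` add up to `ε_P (Ψ h) = ζ h`, while the first one is `ε h`; hence the
coefficient of `M_(m)` is `ζ h - ε h`, which is `ζ (π_m h)` for `m > 0` and vanishes on
`H_0 = k` because `ζ` and `ε` are both unital there; so parts equal to `0` kill a coefficient. -/

theorem isComposition_iff_zero_notMem {α : List ℕ} : IsComposition α ↔ 0 ∉ α := by
  simp only [IsComposition, Nat.pos_iff_ne_zero]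
  exact ⟨fun h h0 => h 0 h0 rfl, fun h a ha ha0 => h (ha0 ▸ ha)⟩

theorem LinearMap.ext_of_iSup_eq_top {R M N ι : Type*} [Semiring R] [AddCommMonoid M]
    [Module R M] [AddCommMonoid N] [Module R N] {p : ι → Submodule R M} (hp : iSup p = ⊤)
    {f g : M →ₗ[R] N} (h : ∀ i, ∀ x ∈ p i, f x = g x) : f = g :=
  LinearMap.ext_on (s := ⋃ i, (p i : Set M)) (by rw [← Submodule.iSup_eq_span, hp])
    (fun x hx => by obtain ⟨i, hi⟩ := Set.mem_iUnion.mp hx; exact h i x hi)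

theorem List.take_eq_singleton_and_drop_eq_iff {α : Type*} {l t : List α} {a : α} {i : ℕ}
    (hi : i ≤ l.length) : (l.take i = [a] ∧ l.drop i = t) ↔ (i = 1 ∧ l = a :: t) := by
  constructor
  · rintro ⟨htake, hdrop⟩
    have hi1 : i = 1 := by simpa [hi] using congrArg List.length htake
    exact ⟨hi1, by rw [← List.take_append_drop i l, htake, hdrop]; rfl⟩
  · rintro ⟨rfl, rfl⟩
    simp

section QSym

variable {k : Type*} [CommRing k]

theorem counitQ_eq_lapply : counitQ k = Finsupp.lapply [] := by
  refine Finsupp.lhom_ext fun β c => ?_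
  by_cases hβ : β = [] <;> simp [counitQ, hβ, eq_comm]

theorem epsP_apply_of_mem_supported {m : ℕ} {f : QSymM k}
    (hf : f ∈ Finsupp.supported k k {β : List ℕ | β.sum = m}) :
    epsP k f = f [] + f [m] := by
  rw [Finsupp.supported_eq_span_single] at hf
  induction hf using Submodule.span_induction with
  | mem x hx =>
    obtain ⟨β, hβ, rfl⟩ := hx
    rcases β with _ | ⟨b, _ | ⟨c, l⟩⟩
    · simp [epsP]
    · obtain rfl : b = m := by simpa using hβ
      simp [epsP]
    · simp [epsP]
  | zero => simp
  | add x y _ _ hx hy => simp only [map_add, hx, hy, Finsupp.add_apply]; ring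
  | smul c x _ hx => simp [hx, mul_add]

theorem lapply_cons_eq_comp_comulQ (a : ℕ) (t : List ℕ) :
    (Finsupp.lapply (a :: t) : QSymM k →ₗ[k] k) =
      LinearMap.mul' k k ∘ₗ TensorProduct.map (Finsupp.lapply [a]) (Finsupp.lapply t) ∘ₗ
        comulQ k := by
  refine Finsupp.lhom_ext fun γ c => ?_
  have hterm : ∀ i ∈ Finset.range (γ.length + 1),
      LinearMap.mul' k k (TensorProduct.map (Finsupp.lapply [a]) (Finsupp.lapply t)
        (Mq k (γ.take i) ⊗ₜ[k] Mq k (γ.drop i))) = if i = 1 ∧ γ = a :: t then 1 else 0 := by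
    intro i hi
    simp only [← List.take_eq_singleton_and_drop_eq_iff
      (Nat.lt_succ_iff.mp (Finset.mem_range.mp hi)), TensorProduct.map_tmul,
      LinearMap.mul'_apply, Finsupp.lapply_apply, Mq, Finsupp.single_apply, ite_zero_mul_ite_zero,
      mul_one]
  simp only [LinearMap.comp_apply, comulQ, Finsupp.lsum_single, LinearMap.toSpanSingleton_apply,
    map_smul, map_sum, Finset.sum_congr rfl hterm, ite_and, Finset.sum_ite_eq',
    Finsupp.lapply_apply, Finsupp.single_apply]
  by_cases hγ : γ = a :: t <;> simp [hγ]

theorem finsum_mem_smul_Mq {f : QSymM k} {S : Set (List ℕ)} (hf : ↑f.support ⊆ S) :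
    ∑ᶠ β ∈ S, f β • Mq k β = f := by
  rw [finsum_mem_eq_sum_of_subset _ (t := f.support) ?_ hf]
  · simp only [Mq, Finsupp.smul_single, smul_eq_mul, mul_one]
    exact f.sum_single
  · rintro β ⟨-, hβ⟩
    simpa [Mq] using hβ

end QSym

section Coefficients

variable {k H : Type*} [CommRing k] [Ring H] [HopfAlgebra k H]

theorem convK_zero_left (g : H →ₗ[k] k) : convK 0 g = 0 := by
  simp [convK]

theorem convK_zero_right (f : H →ₗ[k] k) : convK f 0 = 0 := by
  simp [convK]

theorem algHom_apply_eq_counit_of_mem {ℋ₀ : Submodule k H}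
    (hconn : ℋ₀ = LinearMap.range (Algebra.linearMap k H)) (ζ : H →ₐ[k] k) {x : H}
    (hx : x ∈ ℋ₀) : ζ x = Coalgebra.counit (R := k) x := by
  subst hconn
  obtain ⟨c, rfl⟩ := hx
  simp [Algebra.linearMap_apply]

variable {Ψ : H →ₗ[k] QSymM k}

theorem lapply_cons_comp
    (hΨcomul : comulQ k ∘ₗ Ψ = TensorProduct.map Ψ Ψ ∘ₗ Coalgebra.comul (R := k))
    (a : ℕ) (t : List ℕ) :
    Finsupp.lapply (a :: t) ∘ₗ Ψ = convK (Finsupp.lapply [a] ∘ₗ Ψ) (Finsupp.lapply t ∘ₗ Ψ) := by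
  rw [lapply_cons_eq_comp_comulQ, LinearMap.comp_assoc, LinearMap.comp_assoc, hΨcomul, convK,
    TensorProduct.map_comp, LinearMap.comp_assoc]

variable {ℋ : ℕ → Submodule k H}

theorem counit_eq_zero_of_mem
    (hΨgraded : ∀ n : ℕ, ∀ h ∈ ℋ n, Ψ h ∈ Finsupp.supported k k {α : List ℕ | α.sum = n})
    (hΨcounit : counitQ k ∘ₗ Ψ = Coalgebra.counit (R := k))
    {m : ℕ} (hm : m ≠ 0) {x : H} (hx : x ∈ ℋ m) : Coalgebra.counit (R := k) x = 0 := by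
  rw [← hΨcounit, LinearMap.comp_apply, counitQ_eq_lapply, Finsupp.lapply_apply]
  exact (Finsupp.mem_supported' _ _).mp (hΨgraded m x hx) [] (by simpa using hm.symm)

theorem apply_singleton_eq_sub_counit (ζ : H →ₐ[k] k)
    (hΨgraded : ∀ n : ℕ, ∀ h ∈ ℋ n, Ψ h ∈ Finsupp.supported k k {α : List ℕ | α.sum = n})
    (hΨcounit : counitQ k ∘ₗ Ψ = Coalgebra.counit (R := k))
    (hΨzeta : epsP k ∘ₗ Ψ = ζ.toLinearMap) {m : ℕ} {x : H} (hx : x ∈ ℋ m) :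
    Ψ x [m] = ζ x - Coalgebra.counit (R := k) x := by
  have hζ : ζ x = Ψ x [] + Ψ x [m] := by
    rw [← epsP_apply_of_mem_supported (hΨgraded m x hx), ← LinearMap.comp_apply, hΨzeta]
    rfl
  have hε : Coalgebra.counit (R := k) x = Ψ x [] := by
    rw [← hΨcounit, LinearMap.comp_apply, counitQ_eq_lapply]
    rfl
  rw [hζ, hε]
  ring


theorem apply_singleton_of_mem (hconn : ℋ 0 = LinearMap.range (Algebra.linearMap k H))
    {π : ℕ → H →ₗ[k] H} (hπ : ∀ n m : ℕ, ∀ h ∈ ℋ m, π n h = if n = m then h else 0)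
    (ζ : H →ₐ[k] k)
    (hΨgraded : ∀ n : ℕ, ∀ h ∈ ℋ n, Ψ h ∈ Finsupp.supported k k {α : List ℕ | α.sum = n})
    (hΨcounit : counitQ k ∘ₗ Ψ = Coalgebra.counit (R := k))
    (hΨzeta : epsP k ∘ₗ Ψ = ζ.toLinearMap) {m : ℕ} {x : H} (hx : x ∈ ℋ m) (a : ℕ) :
    Ψ x [a] = if a = 0 then 0 else ζ (π a x) := by
  by_cases ham : a = m
  · subst ham
    rw [apply_singleton_eq_sub_counit ζ hΨgraded hΨcounit hΨzeta hx]
    by_cases ha : a = 0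
    · subst ha
      simp [algHom_apply_eq_counit_of_mem hconn ζ hx]
    · simp [ha, hπ a a x hx, counit_eq_zero_of_mem hΨgraded hΨcounit ha hx]
  · rw [(Finsupp.mem_supported' _ _).mp (hΨgraded m x hx) [a] (by simpa using ham)]
    simp [hπ a m x hx, ham]

theorem lapply_singleton_comp (hdec : iSup ℋ = ⊤)
    (hconn : ℋ 0 = LinearMap.range (Algebra.linearMap k H))
    {π : ℕ → H →ₗ[k] H} (hπ : ∀ n m : ℕ, ∀ h ∈ ℋ m, π n h = if n = m then h else 0)
    (ζ : H →ₐ[k] k)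
    (hΨgraded : ∀ n : ℕ, ∀ h ∈ ℋ n, Ψ h ∈ Finsupp.supported k k {α : List ℕ | α.sum = n})
    (hΨcounit : counitQ k ∘ₗ Ψ = Coalgebra.counit (R := k))
    (hΨzeta : epsP k ∘ₗ Ψ = ζ.toLinearMap) (a : ℕ) :
    Finsupp.lapply [a] ∘ₗ Ψ = if a = 0 then 0 else ζ.toLinearMap ∘ₗ π a := by
  refine LinearMap.ext_of_iSup_eq_top hdec fun m x hx => ?_
  rw [LinearMap.comp_apply, Finsupp.lapply_apply,
    apply_singleton_of_mem hconn hπ ζ hΨgraded hΨcounit hΨzeta hx]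
  split_ifs <;> rfl

theorem lapply_comp_eq_zetaA (hdec : iSup ℋ = ⊤)
    (hconn : ℋ 0 = LinearMap.range (Algebra.linearMap k H))
    {π : ℕ → H →ₗ[k] H} (hπ : ∀ n m : ℕ, ∀ h ∈ ℋ m, π n h = if n = m then h else 0)
    (ζ : H →ₐ[k] k)
    (hΨgraded : ∀ n : ℕ, ∀ h ∈ ℋ n, Ψ h ∈ Finsupp.supported k k {α : List ℕ | α.sum = n})
    (hΨcomul : comulQ k ∘ₗ Ψ = TensorProduct.map Ψ Ψ ∘ₗ Coalgebra.comul (R := k))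
    (hΨcounit : counitQ k ∘ₗ Ψ = Coalgebra.counit (R := k))
    (hΨzeta : epsP k ∘ₗ Ψ = ζ.toLinearMap) (β : List ℕ) :
    Finsupp.lapply β ∘ₗ Ψ = if 0 ∈ β then 0 else zetaA ζ π β := by
  induction β with
  | nil => simp [zetaA, ← hΨcounit, counitQ_eq_lapply]
  | cons a t ih =>
    rw [lapply_cons_comp hΨcomul,
      lapply_singleton_comp hdec hconn hπ ζ hΨgraded hΨcounit hΨzeta, ih]
    by_cases ha : a = 0
    · simp [ha, convK_zero_left]
    · by_cases ht : 0 ∈ t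
      · simp [ht, convK_zero_right]
      · simp [ha, ht, Ne.symm ha]
        rfl

end Coefficients

theorem ABS_psi_formula_general {k H : Type*} [CommRing k] [Ring H] [HopfAlgebra k H]
    (ℋ : ℕ → Submodule k H) (π : ℕ → H →ₗ[k] H)
    (hdec : DirectSum.IsInternal ℋ)
    (hconn : ℋ 0 = LinearMap.range (Algebra.linearMap k H))
    (hπ : ∀ n m : ℕ, ∀ h ∈ ℋ m, π n h = if n = m then h else 0)
    (ζ : H →ₐ[k] k) (Ψ : H →ₗ[k] QSymM k)
    (hΨgraded : ∀ n : ℕ, ∀ h ∈ ℋ n,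
      Ψ h ∈ Finsupp.supported k k {α : List ℕ | α.sum = n})
    (hΨcomul : comulQ k ∘ₗ Ψ = TensorProduct.map Ψ Ψ ∘ₗ Coalgebra.comul (R := k))
    (hΨcounit : counitQ k ∘ₗ Ψ = Coalgebra.counit (R := k))
    (hΨzeta : epsP k ∘ₗ Ψ = ζ.toLinearMap) :
    ∀ n : ℕ, ∀ h ∈ ℋ n,
      Ψ h = ∑ᶠ α ∈ {α : List ℕ | IsComposition α ∧ α.sum = n},
        zetaA ζ π α h • Mq k α := by
  intro n h hh
  have hcoeff (β : List ℕ) : Ψ h β = if 0 ∈ β then 0 else zetaA ζ π β h := by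
    rw [← Finsupp.lapply_apply (R := k), ← LinearMap.comp_apply,
      lapply_comp_eq_zetaA hdec.submodule_iSup_eq_top hconn hπ ζ hΨgraded hΨcomul hΨcounit
        hΨzeta β]
    split_ifs <;> rfl
  have hsupp : ↑(Ψ h).support ⊆ {α : List ℕ | IsComposition α ∧ α.sum = n} := by
    intro β hβ
    rw [Finset.mem_coe, Finsupp.mem_support_iff] at hβ
    refine ⟨isComposition_iff_zero_notMem.mpr fun h0 => hβ (by simp [hcoeff, h0]), ?_⟩
    by_contra hsum
    exact hβ ((Finsupp.mem_supported' _ _).mp (hΨgraded n h hh) β hsum)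
  refine (finsum_mem_smul_Mq hsupp).symm.trans (finsum_mem_congr rfl fun α hα => ?_)
  rw [hcoeff, if_neg (isComposition_iff_zero_notMem.mp hα.1)]

/-- Aguiar–Bergeron–Sottile formula: let `H` be a connected graded `k`-Hopf algebra (grading
`ℋ`, graded projections `π`), `ζ : H → k` a `k`-algebra homomorphism, and
`Ψ : H → QSym` the unique graded `k`-coalgebra homomorphism with `ε_P ∘ Ψ = ζ`.  Then for every
`n ∈ ℕ` and every `h ∈ H_n`,
`Ψ(h) = ∑_{α composition, |α| = n} ζ_α(h) · M_α`,
where `ζ_α` is the composite of `Δ^{(m-1)}`, `π_α`, `ζ^{⊗m}` and `k^{⊗m} ≅ k` for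
`α = (a₁, …, a_m)`. -/
theorem ABS_psi_formula {k H : Type*} [CommRing k] [Ring H] [HopfAlgebra k H]
    (ℋ : ℕ → Submodule k H) (π : ℕ → H →ₗ[k] H)
    (hdec : DirectSum.IsInternal ℋ)
    (hconn : ℋ 0 = LinearMap.range (Algebra.linearMap k H))
    (hπ : ∀ n m : ℕ, ∀ h ∈ ℋ m, π n h = if n = m then h else 0)
    (hgmul : ∀ i j : ℕ, ℋ i * ℋ j ≤ ℋ (i + j))
    (hgcomul : ∀ n : ℕ, ∀ h ∈ ℋ n, Coalgebra.comul (R := k) h ∈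
      ⨆ (p : ℕ × ℕ) (_ : p.1 + p.2 = n),
        LinearMap.range (TensorProduct.mapIncl (ℋ p.1) (ℋ p.2)))
    (ζ : H →ₐ[k] k) (Ψ : H →ₗ[k] QSymM k)
    (hΨgraded : ∀ n : ℕ, ∀ h ∈ ℋ n,
      Ψ h ∈ Finsupp.supported k k {α : List ℕ | α.sum = n})
    (hΨcomul : comulQ k ∘ₗ Ψ = TensorProduct.map Ψ Ψ ∘ₗ Coalgebra.comul (R := k))
    (hΨcounit : counitQ k ∘ₗ Ψ = Coalgebra.counit (R := k))
    (hΨzeta : epsP k ∘ₗ Ψ = ζ.toLinearMap) :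
    ∀ n : ℕ, ∀ h ∈ ℋ n,
      Ψ h = ∑ᶠ α ∈ {α : List ℕ | IsComposition α ∧ α.sum = n},
        zetaA ζ π α h • Mq k α :=
  ABS_psi_formula_general ℋ π hdec hconn hπ ζ Ψ hΨgraded hΨcomul hΨcounit hΨzeta
end

section
/- Let H be a commutative connected graded k-Hopf algebra. For each composition α = (a₁,…,a_k) let ξ_α : H → H be the composite m^{(k−1)} ∘ π_α ∘ Δ^{(k−1)}, and define the Bernstein homomorphism β_H : H → H ⊗[k] QSym by β_H(h) = Σ_α ξ_α(h) ⊗ M_α (a finite sum for each h). Then (id_H ⊗ ε_P) ∘ β_H = id_H, where ε_P : QSym → k is f ↦ f(1,0,0,…) and H ⊗ k is identified with H. In particular, β_H is injective. -/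
open TensorProduct

open TensorProduct

/-! Applying `id ⊗ ε_P` to `β_H(h)` keeps only the compositions of length at most one, leaving
`ξ_∅(h) + ∑_{n > 0} ξ_{(n)}(h) = ε(h) • 1 + ∑_{n > 0} π_n(h)`. On `H_n` the map `ξ_α` vanishes
unless `|α| = n`, since `Δ` preserves degrees and the counit vanishes in positive degrees. So on
homogeneous `h` only one term survives, and it is `h` (in degree `0` by connectedness). The same
vanishing makes every `β_H(h)` a finite sum, to which `id ⊗ ε_P` can be applied termwise. -/

open WithConv

-- Exhaustiveness `⨆ n, ℋ n = ⊤` is not part of this predicate; lemmas that need it assume it.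
structure IsGradedCoalgebra {k C : Type*} [CommRing k] [AddCommGroup C] [Module k C]
    [CoalgebraStruct k C] (ℋ : ℕ → Submodule k C) (π : ℕ → C →ₗ[k] C) : Prop where
  proj_apply : ∀ n m : ℕ, ∀ c ∈ ℋ m, π n c = if n = m then c else 0
  comul_mem : ∀ n : ℕ, ∀ c ∈ ℋ n, Coalgebra.comul (R := k) c ∈
    ⨆ (p : ℕ × ℕ) (_ : p.1 + p.2 = n), LinearMap.range (TensorProduct.mapIncl (ℋ p.1) (ℋ p.2))

lemma LinearMap.eq_of_mem_iSup_range_mapIncl {k M N : Type*} [CommRing k] [AddCommGroup M]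
    [Module k M] [AddCommGroup N] [Module k N] {ℋ : ℕ → Submodule k M} {n : ℕ}
    {f g : M ⊗[k] M →ₗ[k] N}
    (hfg : ∀ p q, p + q = n → ∀ x ∈ ℋ p, ∀ y ∈ ℋ q, f (x ⊗ₜ y) = g (x ⊗ₜ y))
    {t : M ⊗[k] M} (ht : t ∈ ⨆ (p : ℕ × ℕ) (_ : p.1 + p.2 = n),
      LinearMap.range (TensorProduct.mapIncl (ℋ p.1) (ℋ p.2))) :
    f t = g t := by
  refine (iSup₂_le fun p hp => ?_ : _ ≤ LinearMap.eqLocus f g) ht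
  rintro _ ⟨u, rfl⟩
  induction u using TensorProduct.induction_on with
  | zero => simp
  | tmul x y => exact hfg p.1 p.2 hp x x.2 y y.2
  | add u v hu hv => simp_all

namespace IsGradedCoalgebra

variable {k C : Type*} [CommRing k] [AddCommGroup C] [Module k C] [Coalgebra k C]
  {ℋ : ℕ → Submodule k C} {π : ℕ → C →ₗ[k] C}

lemma proj_apply_self (hH : IsGradedCoalgebra ℋ π) {n : ℕ} {c : C} (hc : c ∈ ℋ n) :
    π n c = c := by
  simp [hH.proj_apply n n c hc]

lemma proj_apply_of_ne (hH : IsGradedCoalgebra ℋ π) {n m : ℕ} (hnm : n ≠ m) {c : C}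
    (hc : c ∈ ℋ m) : π n c = 0 := by
  simp [hH.proj_apply n m c hc, hnm]

theorem counit_eq_zero (hH : IsGradedCoalgebra ℋ π) {n : ℕ} (hn : n ≠ 0) {c : C}
    (hc : c ∈ ℋ n) : Coalgebra.counit (R := k) c = 0 := by
  set ε : C →ₗ[k] k := Coalgebra.counit
  -- `ε ⋆ (ε ∘ π₀)` and `(ε ∘ πₙ) ⋆ ε` agree on `Δ c`, since `π₀ y ≠ 0` and `πₙ x ≠ 0` force the
  -- same bidegree `(n, 0)` on a homogeneous tensor `x ⊗ y` of total degree `n`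
  have key : (toConv ε * toConv (ε ∘ₗ π 0)) c = (toConv (ε ∘ₗ π n) * toConv ε) c := by
    refine LinearMap.eq_of_mem_iSup_range_mapIncl
      (f := LinearMap.mul' k k ∘ₗ TensorProduct.map ε (ε ∘ₗ π 0))
      (g := LinearMap.mul' k k ∘ₗ TensorProduct.map (ε ∘ₗ π n) ε)
      (fun p q hpq x hx y hy => ?_) (hH.comul_mem n c hc)
    simp only [LinearMap.coe_comp, Function.comp_apply, TensorProduct.map_tmul,
      LinearMap.mul'_apply, hH.proj_apply _ _ _ hx, hH.proj_apply _ _ _ hy]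
    split_ifs <;> first | omega | simp
  have hε : toConv ε = 1 := rfl
  rw [hε, one_mul, mul_one] at key
  simpa [hH.proj_apply_of_ne (Ne.symm hn) hc, hH.proj_apply_self hc] using key.symm

end IsGradedCoalgebra

section Xi

variable {k H : Type*} [CommRing k] [Ring H] [HopfAlgebra k H]

lemma toConv_xiA_nil (π : ℕ → H →ₗ[k] H) : toConv (xiA π []) = 1 := rfl

lemma toConv_xiA_cons (π : ℕ → H →ₗ[k] H) (a : ℕ) (t : List ℕ) :
    toConv (xiA π (a :: t)) = toConv (π a) * toConv (xiA π t) := rfl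

lemma xiA_singleton (π : ℕ → H →ₗ[k] H) (n : ℕ) : xiA π [n] = π n := by
  rw [← toConv_injective.eq_iff, toConv_xiA_cons, toConv_xiA_nil, mul_one]

lemma IsGradedCoalgebra.xiA_eq_zero {ℋ : ℕ → Submodule k H} {π : ℕ → H →ₗ[k] H}
    (hH : IsGradedCoalgebra ℋ π) {α : List ℕ} {n : ℕ} (hα : α.sum ≠ n) {h : H}
    (hh : h ∈ ℋ n) : xiA π α h = 0 := by
  induction α generalizing n h with
  | nil =>
    simp [xiA, hH.counit_eq_zero (Ne.symm hα) hh]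
  | cons a t ih =>
    refine LinearMap.eq_of_mem_iSup_range_mapIncl
      (f := LinearMap.mul' k H ∘ₗ TensorProduct.map (π a) (xiA π t)) (g := 0)
      (fun p q hpq x hx y hy => ?_) (hH.comul_mem n h hh)
    by_cases hpa : p = a
    · have hy0 : xiA π t y = 0 := ih (by rw [List.sum_cons] at hα; omega) hy
      simp [hy0]
    · simp [hH.proj_apply_of_ne (Ne.symm hpa) hx]

end Xi

lemma IsComposition.eq_of_length_le_one {α : List ℕ} (hα : IsComposition α)
    (hlen : α.length ≤ 1) : α = if α.sum = 0 then [] else [α.sum] := by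
  match α, hlen with
  | [], _ => rfl
  | [m], _ => simp [(hα m (by simp)).ne']

lemma setOf_isComposition_sum_eq_finite (n : ℕ) :
    {α : List ℕ | IsComposition α ∧ α.sum = n}.Finite :=
  (Set.finite_range (Composition.blocks (n := n))).subset
    fun α ⟨hpos, hsum⟩ => ⟨⟨α, hpos _, hsum⟩, rfl⟩

lemma epsP_Mq (k : Type*) [CommRing k] (α : List ℕ) :
    epsP k (Mq k α) = if α.length ≤ 1 then 1 else 0 := by
  split_ifs with hlen <;> simp [epsP, Mq, hlen]

namespace IsGradedCoalgebra

variable {k H : Type*} [CommRing k] [Ring H] [HopfAlgebra k H]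
  {ℋ : ℕ → Submodule k H} {π : ℕ → H →ₗ[k] H}

lemma finite_xiA_support (hH : IsGradedCoalgebra ℋ π) (htop : ⨆ n, ℋ n = ⊤) (h : H) :
    ({α | IsComposition α} ∩ Function.support fun α => xiA π α h).Finite := by
  have hmem : h ∈ ⨆ n, ℋ n := htop ▸ Submodule.mem_top
  induction hmem using Submodule.iSup_induction' with
  | mem n h hh =>
    exact (setOf_isComposition_sum_eq_finite n).subset
      fun α ⟨hα, hne⟩ => ⟨hα, not_not.1 fun hsum => hne (hH.xiA_eq_zero hsum hh)⟩
  | zero => simp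
  | add x y _ _ hx hy =>
    refine (hx.union hy).subset ?_
    rw [← Set.inter_union_distrib_left]
    exact Set.inter_subset_inter_right _ (by simpa only [map_add] using Function.support_add _ _)

lemma finsum_epsP_smul_xiA_of_mem (hH : IsGradedCoalgebra ℋ π)
    (hconn : ℋ 0 = LinearMap.range (Algebra.linearMap k H)) {n : ℕ} {h : H} (hh : h ∈ ℋ n) :
    ∑ᶠ α ∈ {α | IsComposition α}, epsP k (Mq k α) • xiA π α h = h := by
  set a : List ℕ := if n = 0 then [] else [n]
  have ha : IsComposition a := by
    by_cases hn : n = 0 <;> simp [a, IsComposition, hn]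
    omega
  have hsupp : ∀ α, IsComposition α → epsP k (Mq k α) • xiA π α h ≠ 0 → α = a := by
    intro α hα hne
    have hlen : α.length ≤ 1 := by_contra fun hlen => hne (by simp [epsP_Mq, hlen])
    have hsum : α.sum = n := by_contra fun hsum => hne (by simp [hH.xiA_eq_zero hsum hh])
    rw [hα.eq_of_length_le_one hlen, hsum]
  rw [finsum_mem_eq_sum_of_subset _ (s := {α | IsComposition α}) (t := {a})
    (fun α ⟨hα, hne⟩ => Finset.mem_singleton.2 (hsupp α hα hne)) (by simpa using ha),
    Finset.sum_singleton]
  by_cases hn : n = 0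
  · subst hn
    obtain ⟨c, rfl⟩ := hconn ▸ hh
    simp [a, epsP_Mq, xiA]
  · simp [a, hn, epsP_Mq, xiA_singleton, hH.proj_apply_self hh]

theorem finsum_epsP_smul_xiA (hH : IsGradedCoalgebra ℋ π) (htop : ⨆ n, ℋ n = ⊤)
    (hconn : ℋ 0 = LinearMap.range (Algebra.linearMap k H)) (h : H) :
    ∑ᶠ α ∈ {α | IsComposition α}, epsP k (Mq k α) • xiA π α h = h := by
  have hfin : ∀ x : H, ({α | IsComposition α} ∩
      Function.support fun α => epsP k (Mq k α) • xiA π α x).Finite := fun x =>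
    (hH.finite_xiA_support htop x).subset
      (Set.inter_subset_inter_right _ (Function.support_smul_subset_right
        (fun α => epsP k (Mq k α)) (fun α => xiA π α x)))
  have hmem : h ∈ ⨆ n, ℋ n := htop ▸ Submodule.mem_top
  induction hmem using Submodule.iSup_induction' with
  | mem n h hh => exact hH.finsum_epsP_smul_xiA_of_mem hconn hh
  | zero => simp
  | add x y _ _ hx hy =>
    simp only [map_add, smul_add]
    rw [finsum_mem_add_distrib' (hfin x) (hfin y), hx, hy]

theorem leftInverse_bernstein (hH : IsGradedCoalgebra ℋ π) (htop : ⨆ n, ℋ n = ⊤)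
    (hconn : ℋ 0 = LinearMap.range (Algebra.linearMap k H)) :
    Function.LeftInverse ((TensorProduct.rid k H).toLinearMap ∘ₗ LinearMap.lTensor H (epsP k))
      fun h => ∑ᶠ α ∈ {α | IsComposition α}, xiA π α h ⊗ₜ[k] Mq k α := by
  intro h
  have hfin : ({α | IsComposition α} ∩
      Function.support fun α => xiA π α h ⊗ₜ[k] Mq k α).Finite :=
    (hH.finite_xiA_support htop h).subset <| Set.inter_subset_inter_right _ <|
      Function.support_subset_iff'.2 fun α hα => by rw [Function.notMem_support.1 hα, zero_tmul]
  have hmap := ((TensorProduct.rid k H).toLinearMap ∘ₗ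
    LinearMap.lTensor H (epsP k)).toAddMonoidHom.map_finsum_mem' hfin
  rw [LinearMap.toAddMonoidHom_coe] at hmap
  rw [hmap]
  simpa using hH.finsum_epsP_smul_xiA htop hconn h

end IsGradedCoalgebra

theorem bernstein_counit_section_general {k H : Type*} [CommRing k] [CommRing H] [HopfAlgebra k H]
    (ℋ : ℕ → Submodule k H) (π : ℕ → H →ₗ[k] H)
    (hdec : DirectSum.IsInternal ℋ)
    (hconn : ℋ 0 = LinearMap.range (Algebra.linearMap k H))
    (hπ : ∀ n m : ℕ, ∀ h ∈ ℋ m, π n h = if n = m then h else 0)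
    (hgcomul : ∀ n : ℕ, ∀ h ∈ ℋ n, Coalgebra.comul (R := k) h ∈
      ⨆ (p : ℕ × ℕ) (_ : p.1 + p.2 = n),
        LinearMap.range (TensorProduct.mapIncl (ℋ p.1) (ℋ p.2))) :
    (∀ h : H,
      ∑ᶠ α ∈ {α : List ℕ | IsComposition α}, epsP k (Mq k α) • xiA π α h = h) ∧
    Function.Injective (fun h : H =>
      ∑ᶠ α ∈ {α : List ℕ | IsComposition α}, xiA π α h ⊗ₜ[k] Mq k α) := by
  have hH : IsGradedCoalgebra ℋ π := ⟨hπ, hgcomul⟩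
  have htop := hdec.submodule_iSup_eq_top
  exact ⟨hH.finsum_epsP_smul_xiA htop hconn, (hH.leftInverse_bernstein htop hconn).injective⟩

/-- Let `H` be a commutative connected graded `k`-Hopf algebra (grading `ℋ`, graded projections
`π`), and let `β_H : H → H ⊗[k] QSym`, `β_H(h) = ∑_α ξ_α(h) ⊗ M_α` (sum over compositions `α`),
be the Bernstein homomorphism, where `ξ_α = m^{(m-1)} ∘ π_α ∘ Δ^{(m-1)}`.  Then
`(id_H ⊗ ε_P) ∘ β_H = id_H`; in particular `β_H` is injective. -/
theorem bernstein_counit_section {k H : Type*} [CommRing k] [CommRing H] [HopfAlgebra k H]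
    (ℋ : ℕ → Submodule k H) (π : ℕ → H →ₗ[k] H)
    (hdec : DirectSum.IsInternal ℋ)
    (hconn : ℋ 0 = LinearMap.range (Algebra.linearMap k H))
    (hπ : ∀ n m : ℕ, ∀ h ∈ ℋ m, π n h = if n = m then h else 0)
    (hgmul : ∀ i j : ℕ, ℋ i * ℋ j ≤ ℋ (i + j))
    (hgcomul : ∀ n : ℕ, ∀ h ∈ ℋ n, Coalgebra.comul (R := k) h ∈
      ⨆ (p : ℕ × ℕ) (_ : p.1 + p.2 = n),
        LinearMap.range (TensorProduct.mapIncl (ℋ p.1) (ℋ p.2))) :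
    (∀ h : H,
      ∑ᶠ α ∈ {α : List ℕ | IsComposition α}, epsP k (Mq k α) • xiA π α h = h) ∧
    Function.Injective (fun h : H =>
      ∑ᶠ α ∈ {α : List ℕ | IsComposition α}, xiA π α h ⊗ₜ[k] Mq k α) :=
  bernstein_counit_section_general ℋ π hdec hconn hπ hgcomul
end
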